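/- arXiv:1808.03158 — 4 statements merged into one kernel-verified Lean document; each statement's English description precedes it below -/
import Mathlib

section
/- There exists a constant C > 0 such that for every n ∈ ℤ³ one has ∑_{m∈ℤ³} ⟨m⟩^{-2}⟨n−m⟩^{-2} ≤ C ⟨n⟩^{-1}. -/
open scoped ENNReal NNReal BigOperators

noncomputable section

/-- The square of the Euclidean norm of a lattice point `n ∈ ℤ³`, as a real number. -/
def nsqR (n : Fin 3 → ℤ) : ℝ := ∑ i, ((n i : ℝ))^2

/-- The Japanese bracket `⟨n⟩ = (1 + |n|²)^(1/2)`, as an element of `[0,∞]`. -/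
def jbE (n : Fin 3 → ℤ) : ℝ≥0∞ := ENNReal.ofReal (Real.sqrt (1 + nsqR n))

/-!
Replace `⟨m⟩` by the comparable integer weight `w(m) = ‖m‖∞ + 1`, which satisfies
`w(n) ≤ w(m) + w(n - m)`. If `a ≤ b` are the two weights of `m` and `n - m` and `c = w(n)`,
then `b ≥ c / 2`, so `(ab)⁻² ≤ 4 (ca)⁻²` when `a ≤ c`, while `(ab)⁻² ≤ a⁻⁴` when `a > c`.
Summing this majorant over `ℤ³` shell by shell (the shell `‖m‖∞ = k` has `O(k²)` points) gives
`∑_{a ≤ c} 4 c⁻² + ∑_{a > c} a⁻² = O(c⁻¹)`, and `c⁻¹ ≤ 2 ⟨n⟩⁻¹`.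
-/

open Finset

section SupNorm

variable {d : ℕ}

def supNorm (m : Fin d → ℤ) : ℕ := univ.sup fun i => (m i).natAbs

lemma supNorm_le_iff {m : Fin d → ℤ} {k : ℕ} : supNorm m ≤ k ↔ ∀ i, (m i).natAbs ≤ k := by
  simp [supNorm]

lemma natAbs_le_supNorm (m : Fin d → ℤ) (i : Fin d) : (m i).natAbs ≤ supNorm m :=
  supNorm_le_iff.1 le_rfl i

lemma supNorm_add_le (x y : Fin d → ℤ) : supNorm (x + y) ≤ supNorm x + supNorm y :=
  supNorm_le_iff.2 fun i =>
    (Int.natAbs_add_le _ _).trans (add_le_add (natAbs_le_supNorm x i) (natAbs_le_supNorm y i))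

lemma sq_supNorm_le_sum_sq (m : Fin d → ℤ) : (supNorm m : ℝ) ^ 2 ≤ ∑ i, (m i : ℝ) ^ 2 := by
  rcases (univ : Finset (Fin d)).eq_empty_or_nonempty with h | h
  · simp [supNorm, h]
  obtain ⟨i, -, hi⟩ := exists_mem_eq_sup univ h fun i => (m i).natAbs
  calc (supNorm m : ℝ) ^ 2 = (m i : ℝ) ^ 2 := by
        rw [supNorm, hi, Nat.cast_natAbs, Int.cast_abs, sq_abs]
    _ ≤ ∑ j, (m j : ℝ) ^ 2 := single_le_sum (fun j _ => sq_nonneg (m j : ℝ)) (mem_univ i)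

lemma sum_sq_le_card_mul_sq_supNorm (m : Fin d → ℤ) :
    ∑ i, (m i : ℝ) ^ 2 ≤ d * (supNorm m : ℝ) ^ 2 := by
  calc ∑ i, (m i : ℝ) ^ 2 ≤ ∑ _i : Fin d, (supNorm m : ℝ) ^ 2 := by
        refine sum_le_sum fun i _ => ?_
        rw [← sq_abs, ← Int.cast_abs, ← Nat.cast_natAbs]
        gcongr
        exact natAbs_le_supNorm m i
    _ = d * (supNorm m : ℝ) ^ 2 := by simp

variable (d) in
def supNormBall (k : ℕ) : Finset (Fin d → ℤ) := Fintype.piFinset fun _ => Icc (-k : ℤ) k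

lemma mem_supNormBall {m : Fin d → ℤ} {k : ℕ} : m ∈ supNormBall d k ↔ supNorm m ≤ k := by
  simp only [supNormBall, Fintype.mem_piFinset, mem_Icc, supNorm_le_iff]
  exact forall_congr' fun i => by omega

lemma card_supNormBall (k : ℕ) : #(supNormBall d k) = (2 * k + 1) ^ d := by
  simp only [supNormBall, Fintype.card_piFinset, Int.card_Icc, prod_const, card_univ,
    Fintype.card_fin]
  congr 1
  omega

lemma card_supNorm_fiber_le (hd : d ≠ 0) (k : ℕ) :
    #{m ∈ supNormBall d k | supNorm m = k} ≤ 2 * d * (2 * k + 1) ^ (d - 1) := by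
  rcases k with _ | k
  · calc #{m ∈ supNormBall d 0 | supNorm m = 0} ≤ #(supNormBall d 0) := card_filter_le _ _
      _ ≤ 2 * d * (2 * 0 + 1) ^ (d - 1) := by
        rw [card_supNormBall]
        simp only [mul_zero, zero_add, one_pow, mul_one]
        omega
  have hsub : {m ∈ supNormBall d (k + 1) | supNorm m = k + 1} ⊆
      supNormBall d (k + 1) \ supNormBall d k := by
    intro m
    simp only [mem_filter, mem_sdiff, mem_supNormBall]
    omega
  have hball : supNormBall d k ⊆ supNormBall d (k + 1) := fun m hm =>
    mem_supNormBall.2 ((mem_supNormBall.1 hm).trans k.le_succ)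
  refine (card_le_card hsub).trans ?_
  rw [card_sdiff_of_subset hball, card_supNormBall, card_supNormBall]
  zify [Nat.pow_le_pow_left (show 2 * k + 1 ≤ 2 * (k + 1) + 1 by omega) d]
  have h := abs_pow_sub_pow_le (α := ℤ) (2 * (k + 1) + 1) (2 * k + 1) d
  have ha : |2 * ((k : ℤ) + 1) + 1| = 2 * (k + 1) + 1 := abs_of_nonneg (by positivity)
  have hb : |2 * (k : ℤ) + 1| = 2 * k + 1 := abs_of_nonneg (by positivity)
  rw [ha, hb, max_eq_left (by omega), show 2 * ((k : ℤ) + 1) + 1 - (2 * k + 1) = 2 by ring,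
    abs_two] at h
  exact (le_abs_self _).trans h

lemma tsum_comp_supNorm_le (hd : d ≠ 0) (F : ℕ → ℝ≥0∞) :
    ∑' m : Fin d → ℤ, F (supNorm m) ≤
      ∑' k, ((2 * d * (2 * k + 1) ^ (d - 1) : ℕ) : ℝ≥0∞) * F k := by
  rw [← ENNReal.tsum_fiberwise _ supNorm]
  refine ENNReal.tsum_le_tsum fun k => ?_
  have hfiber : supNorm ⁻¹' {k} =
      ((supNormBall d k).filter (supNorm · = k) : Set (Fin d → ℤ)) := by
    ext m
    simp only [Set.mem_preimage, Set.mem_singleton_iff, coe_filter, mem_supNormBall,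
      Set.mem_ofPred_eq]
    omega
  calc ∑' m : supNorm (d := d) ⁻¹' {k}, F (supNorm (m : Fin d → ℤ))
        = ∑' _ : supNorm (d := d) ⁻¹' {k}, F k := tsum_congr fun m => congrArg F m.2
    _ = ENat.card (supNorm (d := d) ⁻¹' {k}) * F k := ENNReal.tsum_const _
    _ ≤ _ := by
        gcongr
        rw [hfiber, ENat.card_eq_coe_natCard, Nat.card_coe_set_eq, Set.ncard_coe_finset]
        exact_mod_cast card_supNorm_fiber_le hd k

end SupNorm

lemma one_add_nsqR_pos (m : Fin 3 → ℤ) : 0 < 1 + nsqR m := by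
  unfold nsqR
  positivity

lemma jbE_rpow_neg_two (m : Fin 3 → ℤ) : jbE m ^ (-2 : ℝ) = ENNReal.ofReal (1 + nsqR m)⁻¹ := by
  have h := one_add_nsqR_pos m
  rw [jbE, ENNReal.ofReal_rpow_of_pos (Real.sqrt_pos.2 h), Real.rpow_neg (Real.sqrt_nonneg _),
    Real.rpow_two, Real.sq_sqrt h.le]

lemma jbE_rpow_neg_one (m : Fin 3 → ℤ) :
    jbE m ^ (-1 : ℝ) = ENNReal.ofReal (Real.sqrt (1 + nsqR m))⁻¹ := by
  have h := one_add_nsqR_pos m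
  rw [jbE, ENNReal.ofReal_rpow_of_pos (Real.sqrt_pos.2 h), Real.rpow_neg_one]

lemma jbE_rpow_neg_two_le (m : Fin 3 → ℤ) :
    jbE m ^ (-2 : ℝ) ≤ ENNReal.ofReal (2 / ((supNorm m + 1 : ℕ) : ℝ) ^ 2) := by
  have hs := sq_supNorm_le_sum_sq m
  rw [jbE_rpow_neg_two, inv_eq_one_div]
  refine ENNReal.ofReal_le_ofReal ?_
  rw [div_le_div_iff₀ (one_add_nsqR_pos m) (by positivity), nsqR]
  push_cast
  nlinarith [sq_nonneg ((supNorm m : ℝ) - 1)]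

lemma ofReal_inv_le_jbE_rpow_neg_one (n : Fin 3 → ℤ) :
    ENNReal.ofReal ((supNorm n + 1 : ℕ) : ℝ)⁻¹ ≤ ENNReal.ofReal 2 * jbE n ^ (-1 : ℝ) := by
  have hs := sum_sq_le_card_mul_sq_supNorm n
  have hsqrt : Real.sqrt (1 + nsqR n) ≤ 2 * ((supNorm n + 1 : ℕ) : ℝ) := by
    rw [Real.sqrt_le_left (by positivity), nsqR]
    push_cast at hs ⊢
    nlinarith [(supNorm n).cast_nonneg (α := ℝ)]
  rw [jbE_rpow_neg_one, ← ENNReal.ofReal_mul (by norm_num)]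
  refine ENNReal.ofReal_le_ofReal ?_
  calc ((supNorm n + 1 : ℕ) : ℝ)⁻¹ = 2 * (2 * ((supNorm n + 1 : ℕ) : ℝ))⁻¹ := by field_simp
    _ ≤ 2 * (Real.sqrt (1 + nsqR n))⁻¹ := by
        gcongr
        exact Real.sqrt_pos.2 (one_add_nsqR_pos n)

def convMajorant (c a : ℝ) : ℝ := if a ≤ c then 4 / (c * a) ^ 2 else 1 / a ^ 4

lemma convMajorant_nonneg (c a : ℝ) : 0 ≤ convMajorant c a := by
  unfold convMajorant; split_ifs <;> positivity

lemma inv_sq_mul_le_convMajorant {a b c : ℝ} (ha : 0 < a) (hab : a ≤ b) (habc : c ≤ a + b) :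
    1 / (a * b) ^ 2 ≤ convMajorant c a := by
  have hb : 0 < b := ha.trans_le hab
  unfold convMajorant
  split_ifs with hac
  · have hc : 0 < c := ha.trans_le hac
    have hca : c * a ≤ 2 * (a * b) := by nlinarith
    rw [div_le_div_iff₀ (by positivity) (by positivity), one_mul,
      show 4 * (a * b) ^ 2 = (2 * (a * b)) ^ 2 by ring]
    exact pow_le_pow_left₀ (by positivity) hca 2
  · rw [div_le_div_iff₀ (by positivity) (by positivity), one_mul, one_mul,
      show a ^ 4 = (a * a) ^ 2 by ring]
    exact pow_le_pow_left₀ (by positivity) (mul_le_mul_of_nonneg_left hab ha.le) 2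

lemma inv_sq_mul_le_convMajorant_add {a b c : ℝ} (ha : 0 < a) (hb : 0 < b) (habc : c ≤ a + b) :
    1 / (a * b) ^ 2 ≤ convMajorant c a + convMajorant c b := by
  rcases le_total a b with hab | hba
  · exact (inv_sq_mul_le_convMajorant ha hab habc).trans
      (le_add_of_nonneg_right (convMajorant_nonneg c b))
  · rw [mul_comm]
    exact (inv_sq_mul_le_convMajorant hb hba (by linarith)).trans
      (le_add_of_nonneg_left (convMajorant_nonneg c a))

lemma sum_range_sq_mul_convMajorant_le {c : ℕ} (hc : 1 ≤ c) (N : ℕ) :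
    ∑ k ∈ range N, ((k + 1 : ℕ) : ℝ) ^ 2 * convMajorant c ((k + 1 : ℕ) : ℝ) ≤ 6 / (c : ℝ) := by
  have hterm : ∀ k : ℕ, ((k + 1 : ℕ) : ℝ) ^ 2 * convMajorant c ((k + 1 : ℕ) : ℝ) =
      if k < c then 4 / (c : ℝ) ^ 2 else 1 / ((k + 1 : ℕ) : ℝ) ^ 2 := by
    intro k
    have hk : ((k : ℝ) + 1 ≤ c ↔ k < c) := by norm_cast
    simp only [convMajorant, Nat.cast_add_one, hk]
    split_ifs <;> field_simp
  have hc' : (0 : ℝ) < c := by exact_mod_cast hc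
  have hnear : ∑ k ∈ range N with k < c, 4 / (c : ℝ) ^ 2 ≤ 4 / (c : ℝ) := by
    rw [sum_const, nsmul_eq_mul]
    have hcard : #{k ∈ range N | k < c} ≤ c :=
      (card_le_card fun k hk => mem_range.2 (mem_filter.1 hk).2).trans (card_range c).le
    calc (#{k ∈ range N | k < c} : ℝ) * (4 / (c : ℝ) ^ 2) ≤ c * (4 / (c : ℝ) ^ 2) := by
          gcongr
      _ = 4 / (c : ℝ) := by field_simp
  have hfar : ∑ k ∈ range N with ¬k < c, 1 / ((k + 1 : ℕ) : ℝ) ^ 2 ≤ 2 / (c : ℝ) := by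
    calc ∑ k ∈ range N with ¬k < c, 1 / ((k + 1 : ℕ) : ℝ) ^ 2
        = ∑ i ∈ {k ∈ range N | ¬k < c}.map (addRightEmbedding 1), 1 / (i : ℝ) ^ 2 :=
          (sum_map _ (addRightEmbedding 1) fun i : ℕ => 1 / (i : ℝ) ^ 2).symm
      _ ≤ ∑ i ∈ Ioo c (N + 1), ((i : ℝ) ^ 2)⁻¹ := by
          simp only [one_div]
          refine sum_le_sum_of_subset_of_nonneg ?_ fun i _ _ => by positivity
          intro i
          simp only [mem_map, mem_filter, mem_range, addRightEmbedding_apply, mem_Ioo]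
          omega
      _ ≤ 2 / (c + 1) := sum_Ioo_inv_sq_le c (N + 1)
      _ ≤ 2 / c := by gcongr; linarith
  rw [sum_congr rfl fun k _ => hterm k, sum_ite]
  calc _ ≤ 4 / (c : ℝ) + 2 / c := add_le_add hnear hfar
    _ = 6 / c := by ring

lemma tsum_convMajorant_supNorm_le {c : ℕ} (hc : 1 ≤ c) :
    ∑' m : Fin 3 → ℤ, ENNReal.ofReal (convMajorant c ((supNorm m + 1 : ℕ) : ℝ))
      ≤ ENNReal.ofReal (144 / c) := by
  calc ∑' m : Fin 3 → ℤ, ENNReal.ofReal (convMajorant c ((supNorm m + 1 : ℕ) : ℝ))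
      ≤ ∑' k : ℕ, ((2 * 3 * (2 * k + 1) ^ (3 - 1) : ℕ) : ℝ≥0∞) *
          ENNReal.ofReal (convMajorant c ((k + 1 : ℕ) : ℝ)) :=
        tsum_comp_supNorm_le (by norm_num) _
    _ ≤ ∑' k : ℕ, ENNReal.ofReal 24 *
          ENNReal.ofReal (((k + 1 : ℕ) : ℝ) ^ 2 * convMajorant c ((k + 1 : ℕ) : ℝ)) := by
        refine ENNReal.tsum_le_tsum fun k => ?_
        rw [← ENNReal.ofReal_natCast, ← ENNReal.ofReal_mul (by positivity),
          ← ENNReal.ofReal_mul (by positivity), ← mul_assoc]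
        refine ENNReal.ofReal_le_ofReal (mul_le_mul_of_nonneg_right ?_ (convMajorant_nonneg _ _))
        push_cast
        nlinarith [k.cast_nonneg (α := ℝ)]
    _ ≤ ENNReal.ofReal 24 * ENNReal.ofReal (6 / c) := by
        rw [ENNReal.tsum_mul_left]
        gcongr
        refine ENNReal.tsum_le_of_sum_range_le fun N => ?_
        rw [← ENNReal.ofReal_sum_of_nonneg fun k _ =>
          mul_nonneg (sq_nonneg _) (convMajorant_nonneg _ _)]
        exact ENNReal.ofReal_le_ofReal (sum_range_sq_mul_convMajorant_le hc N)
    _ = ENNReal.ofReal (144 / c) := by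
        rw [← ENNReal.ofReal_mul (by norm_num)]
        ring_nf

lemma jbE_rpow_neg_two_mul_le (n m : Fin 3 → ℤ) :
    jbE m ^ (-2 : ℝ) * jbE (n - m) ^ (-2 : ℝ) ≤ ENNReal.ofReal 4 *
      (ENNReal.ofReal (convMajorant ((supNorm n + 1 : ℕ) : ℝ) ((supNorm m + 1 : ℕ) : ℝ)) +
        ENNReal.ofReal
          (convMajorant ((supNorm n + 1 : ℕ) : ℝ) ((supNorm (n - m) + 1 : ℕ) : ℝ))) := by
  set a : ℝ := ((supNorm m + 1 : ℕ) : ℝ)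
  set b : ℝ := ((supNorm (n - m) + 1 : ℕ) : ℝ)
  have hab : ((supNorm n + 1 : ℕ) : ℝ) ≤ a + b := by
    have h := supNorm_add_le m (n - m)
    rw [add_sub_cancel] at h
    simp only [a, b]
    exact_mod_cast (by omega : supNorm n + 1 ≤ supNorm m + 1 + (supNorm (n - m) + 1))
  calc jbE m ^ (-2 : ℝ) * jbE (n - m) ^ (-2 : ℝ)
      ≤ ENNReal.ofReal (2 / a ^ 2) * ENNReal.ofReal (2 / b ^ 2) :=
        mul_le_mul' (jbE_rpow_neg_two_le m) (jbE_rpow_neg_two_le (n - m))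
    _ = ENNReal.ofReal 4 * ENNReal.ofReal (1 / (a * b) ^ 2) := by
        rw [← ENNReal.ofReal_mul (by positivity), ← ENNReal.ofReal_mul (by positivity)]
        congr 1
        ring
    _ ≤ _ := by
        rw [← ENNReal.ofReal_add (convMajorant_nonneg _ _) (convMajorant_nonneg _ _)]
        gcongr
        exact inv_sq_mul_le_convMajorant_add (by positivity) (by positivity) hab

lemma tsum_jbE_rpow_neg_two_mul_le (n : Fin 3 → ℤ) :
    ∑' m : Fin 3 → ℤ, jbE m ^ (-2 : ℝ) * jbE (n - m) ^ (-2 : ℝ)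
      ≤ ENNReal.ofReal 1152 * ENNReal.ofReal ((supNorm n + 1 : ℕ) : ℝ)⁻¹ := by
  set c := supNorm n + 1
  set A : (Fin 3 → ℤ) → ℝ≥0∞ := fun m =>
    ENNReal.ofReal (convMajorant c ((supNorm m + 1 : ℕ) : ℝ))
  calc ∑' m : Fin 3 → ℤ, jbE m ^ (-2 : ℝ) * jbE (n - m) ^ (-2 : ℝ)
      ≤ ∑' m, ENNReal.ofReal 4 * (A m + A (n - m)) :=
        ENNReal.tsum_le_tsum (jbE_rpow_neg_two_mul_le n)
    _ = ENNReal.ofReal 8 * ∑' m, A m := by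
        rw [ENNReal.tsum_mul_left, ENNReal.tsum_add,
          show ∑' m, A (n - m) = ∑' m, A m from (Equiv.subLeft n).tsum_eq A, ← two_mul,
          ← mul_assoc, ← ENNReal.ofReal_ofNat 2, ← ENNReal.ofReal_mul (by norm_num)]
        norm_num
    _ ≤ ENNReal.ofReal 8 * ENNReal.ofReal (144 / c) := by
        gcongr
        exact tsum_convMajorant_supNorm_le (by omega)
    _ = ENNReal.ofReal 1152 * ENNReal.ofReal (c : ℝ)⁻¹ := by
        rw [← ENNReal.ofReal_mul (by norm_num), ← ENNReal.ofReal_mul (by norm_num)]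
        ring_nf

/-- Discrete convolution estimate: `∑_{m ∈ ℤ³} ⟨m⟩⁻²⟨n−m⟩⁻² ≤ C ⟨n⟩⁻¹`. -/
theorem discrete_convolution_estimate :
    ∃ C : ℝ, 0 < C ∧ ∀ n : Fin 3 → ℤ,
      ∑' m : Fin 3 → ℤ, jbE m ^ (-2 : ℝ) * jbE (n - m) ^ (-2 : ℝ)
        ≤ ENNReal.ofReal C * jbE n ^ (-1 : ℝ) := by
  refine ⟨2304, by norm_num, fun n => ?_⟩
  calc ∑' m : Fin 3 → ℤ, jbE m ^ (-2 : ℝ) * jbE (n - m) ^ (-2 : ℝ)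
      ≤ ENNReal.ofReal 1152 * ENNReal.ofReal ((supNorm n + 1 : ℕ) : ℝ)⁻¹ :=
        tsum_jbE_rpow_neg_two_mul_le n
    _ ≤ ENNReal.ofReal 1152 * (ENNReal.ofReal 2 * jbE n ^ (-1 : ℝ)) := by
        gcongr
        exact ofReal_inv_le_jbE_rpow_neg_one n
    _ = ENNReal.ofReal 2304 * jbE n ^ (-1 : ℝ) := by
        rw [← mul_assoc, ← ENNReal.ofReal_mul (by norm_num)]
        norm_num
end
end

section
/- Let T > 0 and C > 0, and let f : [0,T] → [0,∞) be continuous and satisfy f(t) ≤ f(0) + C·p·∫₀^t f(τ)^{1−1/p} dτ for every t ∈ [0,T] and every real p ∈ [2,∞). Then f(t) ≤ (f(0)^{1/p} + C·t)^p for every t ∈ [0,T] and every p ∈ [2,∞); in particular, if f(0) = 0, then f(t) = 0 for every t ∈ [0,T] with t < 1/C. -/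
open scoped BigOperators

noncomputable section

/-- FTC computation: `∫₀ᵗ C p (a + Cτ)^(p-1) dτ = (a+Ct)^p - a^p`. -/
lemma yudovich_integral_aux (a C p t : ℝ) (ha : 0 < a) (hC : 0 < C) (hp : 2 ≤ p)
    (ht : 0 ≤ t) :
    ∫ τ in (0:ℝ)..t, C * p * (a + C * τ) ^ (p - 1) = (a + C * t) ^ p - a ^ p := by
  have hpos : ∀ τ ∈ Set.uIcc (0:ℝ) t, 0 < a + C * τ := by
    intro τ hτ
    rw [Set.uIcc_of_le ht] at hτ
    nlinarith [hτ.1]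
  have hderiv : ∀ τ ∈ Set.uIcc (0:ℝ) t,
      HasDerivAt (fun x => (a + C * x) ^ p) (C * p * (a + C * τ) ^ (p - 1)) τ := by
    intro τ hτ
    have h1 : HasDerivAt (fun x : ℝ => a + C * x) C τ := by
      simpa using ((hasDerivAt_id τ).const_mul C).const_add a
    exact h1.rpow_const (Or.inl (ne_of_gt (hpos τ hτ)))
  have hcont : ContinuousOn (fun τ => C * p * (a + C * τ) ^ (p - 1)) (Set.uIcc 0 t) := by
    apply ContinuousOn.mul continuousOn_const
    exact (ContinuousOn.rpow_const (by fun_prop) fun τ hτ =>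
      Or.inl (ne_of_gt (hpos τ hτ)))
  have := intervalIntegral.integral_eq_sub_of_hasDerivAt hderiv
    (hcont.intervalIntegrable)
  simpa using this

/-- Key comparison step: `f t < ((f 0 + ε)^(1/p) + C t)^p` on `[0,T]` for every `ε > 0`. -/
lemma yudovich_key (T C : ℝ) (hT : 0 < T) (hC : 0 < C)
    (f : ℝ → ℝ)
    (hf_cont : ContinuousOn f (Set.Icc 0 T))
    (hf_nonneg : ∀ t ∈ Set.Icc 0 T, 0 ≤ f t)
    (hf : ∀ t ∈ Set.Icc 0 T, ∀ p : ℝ, 2 ≤ p →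
      f t ≤ f 0 + C * p * ∫ τ in (0:ℝ)..t, f τ ^ (1 - 1/p))
    (p : ℝ) (hp : 2 ≤ p) (ε : ℝ) (hε : 0 < ε) :
    ∀ t ∈ Set.Icc 0 T, f t < ((f 0 + ε) ^ (1/p) + C * t) ^ p := by
  have hp0 : (0:ℝ) < p := by linarith
  have hf00 : 0 ≤ f 0 := hf_nonneg 0 ⟨le_rfl, hT.le⟩
  set a : ℝ := (f 0 + ε) ^ (1/p) with ha_def
  have ha : 0 < a := Real.rpow_pos_of_pos (by linarith) _
  have hap : a ^ p = f 0 + ε := by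
    rw [ha_def, ← Real.rpow_mul (by linarith), one_div, inv_mul_cancel₀ hp0.ne',
      Real.rpow_one]
  set g : ℝ → ℝ := fun t => (a + C * t) ^ p with hg_def
  have hg_pos_base : ∀ t : ℝ, 0 ≤ t → 0 < a + C * t := by
    intro t ht; nlinarith
  have hg_cont : ContinuousOn g (Set.Icc 0 T) :=
    ContinuousOn.rpow_const (by fun_prop) fun t ht =>
      Or.inl (ne_of_gt (hg_pos_base t ht.1))
  by_contra hcon
  push_neg at hcon
  obtain ⟨t0, ht0, ht0'⟩ := hcon
  set S : Set ℝ := {t | t ∈ Set.Icc 0 T ∧ g t ≤ f t} with hS_def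
  have hS_ne : S.Nonempty := ⟨t0, ht0, ht0'⟩
  have hS_closed : IsClosed S := by
    have : S = Set.Icc 0 T ∩ (fun t => f t - g t) ⁻¹' Set.Ici 0 := by
      ext t; simp [hS_def, Set.mem_Icc, sub_nonneg, and_comm]
    rw [this]
    exact (hf_cont.sub hg_cont).preimage_isClosed_of_isClosed isClosed_Icc isClosed_Ici
  have hS_bdd : BddBelow S := ⟨0, fun t ht => ht.1.1⟩
  set t1 : ℝ := sInf S with ht1_def
  have ht1S : t1 ∈ S := hS_closed.csInf_mem hS_ne hS_bdd
  have ht1Icc : t1 ∈ Set.Icc 0 T := ht1S.1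
  have ht1nn : 0 ≤ t1 := ht1Icc.1
  have hlt : ∀ τ, 0 ≤ τ → τ < t1 → f τ < g τ := by
    intro τ hτ0 hτt1
    by_contra h
    push_neg at h
    have : τ ∈ S := ⟨⟨hτ0, le_trans hτt1.le ht1Icc.2⟩, h⟩
    exact absurd (csInf_le hS_bdd this) (not_le.mpr hτt1)
  -- integrability of the two integrands on [0, t1]
  have hexp_nn : (0:ℝ) ≤ 1 - 1/p := by
    have : 1/p ≤ 1/2 := by
      apply div_le_div_of_nonneg_left one_pos.le (by norm_num) hp
    linarith
  have hsub : Set.uIcc (0:ℝ) t1 ⊆ Set.Icc 0 T := by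
    rw [Set.uIcc_of_le ht1nn]
    exact Set.Icc_subset_Icc le_rfl ht1Icc.2
  have hfint : IntervalIntegrable (fun τ => f τ ^ (1 - 1/p)) MeasureTheory.volume 0 t1 :=
    ((hf_cont.mono hsub).rpow_const fun τ hτ => Or.inr hexp_nn).intervalIntegrable
  have hgint : IntervalIntegrable (fun τ => g τ ^ (1 - 1/p)) MeasureTheory.volume 0 t1 :=
    ((hg_cont.mono hsub).rpow_const fun τ hτ => Or.inr hexp_nn).intervalIntegrable
  -- a.e. comparison on Icc 0 t1
  have hae : (fun τ => f τ ^ (1 - 1/p)) ≤ᵐ[MeasureTheory.volume.restrict (Set.Icc 0 t1)]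
      fun τ => g τ ^ (1 - 1/p) := by
    have h1 : ∀ᵐ τ ∂(MeasureTheory.volume.restrict (Set.Icc 0 t1)), τ ∈ Set.Icc 0 t1 :=
      MeasureTheory.ae_restrict_mem measurableSet_Icc
    have h2 : ∀ᵐ τ ∂(MeasureTheory.volume.restrict (Set.Icc 0 t1)), τ ≠ t1 := by
      refine MeasureTheory.ae_restrict_of_ae ?_
      have : MeasureTheory.volume ({t1} : Set ℝ) = 0 := Real.volume_singleton
      exact MeasureTheory.ae_iff.mpr (by simpa using this)
    filter_upwards [h1, h2] with τ hτ hτ'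
    have hτlt : τ < t1 := lt_of_le_of_ne hτ.2 hτ'
    have hτIcc : τ ∈ Set.Icc 0 T := ⟨hτ.1, le_trans hτ.2 ht1Icc.2⟩
    exact Real.rpow_le_rpow (hf_nonneg τ hτIcc) (hlt τ hτ.1 hτlt).le hexp_nn
  have hint_le : (∫ τ in (0:ℝ)..t1, f τ ^ (1 - 1/p)) ≤
      ∫ τ in (0:ℝ)..t1, g τ ^ (1 - 1/p) :=
    intervalIntegral.integral_mono_ae_restrict ht1nn hfint hgint hae
  -- compute the g-integral
  have hg_eq : ∀ τ ∈ Set.Icc (0:ℝ) t1, g τ ^ (1 - 1/p) = (a + C * τ) ^ (p - 1) := by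
    intro τ hτ
    have hx := (hg_pos_base τ hτ.1).le
    rw [hg_def]
    simp only
    rw [← Real.rpow_mul hx]
    congr 1
    field_simp
  have hCpne : C * p ≠ 0 := by positivity
  have hgval : C * p * ∫ τ in (0:ℝ)..t1, g τ ^ (1 - 1/p) = (a + C * t1) ^ p - a ^ p := by
    have hcongr : (∫ τ in (0:ℝ)..t1, g τ ^ (1 - 1/p)) =
        ∫ τ in (0:ℝ)..t1, (a + C * τ) ^ (p - 1) := by
      apply intervalIntegral.integral_congr
      intro τ hτ
      exact hg_eq τ (by rwa [Set.uIcc_of_le ht1nn] at hτ)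
    rw [hcongr, ← intervalIntegral.integral_const_mul]
    exact yudovich_integral_aux a C p t1 ha hC hp ht1nn
  have hchain : f t1 ≤ g t1 - ε := by
    have h1 := hf t1 ht1Icc p hp
    have h2 : C * p * (∫ τ in (0:ℝ)..t1, f τ ^ (1 - 1/p)) ≤
        C * p * ∫ τ in (0:ℝ)..t1, g τ ^ (1 - 1/p) := by
      apply mul_le_mul_of_nonneg_left hint_le (by positivity)
    have : f t1 ≤ f 0 + ((a + C * t1) ^ p - a ^ p) := by
      rw [← hgval]; linarith
    rw [hap] at this
    simpa [hg_def] using by linarith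
  have := ht1S.2
  linarith [hε]

/-- Yudovich-type growth lemma: if a continuous nonnegative `f` on `[0,T]` satisfies
`f(t) ≤ f(0) + C p ∫₀ᵗ f(τ)^{1-1/p} dτ` for all `p ≥ 2`, then
`f(t) ≤ (f(0)^{1/p} + C t)^p` for all `p ≥ 2`; in particular `f ≡ 0` on `[0, 1/C)`
if `f(0) = 0`. -/
theorem yudovich_growth_lemma (T C : ℝ) (hT : 0 < T) (hC : 0 < C)
    (f : ℝ → ℝ)
    (hf_cont : ContinuousOn f (Set.Icc 0 T))
    (hf_nonneg : ∀ t ∈ Set.Icc 0 T, 0 ≤ f t)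
    (hf : ∀ t ∈ Set.Icc 0 T, ∀ p : ℝ, 2 ≤ p →
      f t ≤ f 0 + C * p * ∫ τ in (0:ℝ)..t, f τ ^ (1 - 1/p)) :
    (∀ t ∈ Set.Icc 0 T, ∀ p : ℝ, 2 ≤ p → f t ≤ (f 0 ^ (1/p) + C * t) ^ p) ∧
    (f 0 = 0 → ∀ t ∈ Set.Icc 0 T, t < 1/C → f t = 0) := by
  have hf00 : 0 ≤ f 0 := hf_nonneg 0 ⟨le_rfl, hT.le⟩
  have part1 : ∀ t ∈ Set.Icc 0 T, ∀ p : ℝ, 2 ≤ p → f t ≤ (f 0 ^ (1/p) + C * t) ^ p := by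
    intro t ht p hp
    have hp0 : (0:ℝ) < p := by linarith
    set G : ℝ → ℝ := fun ε => ((f 0 + ε) ^ (1/p) + C * t) ^ p with hG_def
    have cG : ContinuousAt G 0 := by
      apply ContinuousAt.rpow_const
      · exact (ContinuousAt.rpow_const (by fun_prop) (Or.inr (by positivity))).add
          continuousAt_const
      · exact Or.inr hp0.le
    have htend : Filter.Tendsto G (nhdsWithin 0 (Set.Ioi 0)) (nhds (G 0)) :=
      cG.tendsto.mono_left nhdsWithin_le_nhds
    have hev : ∀ᶠ ε in nhdsWithin (0:ℝ) (Set.Ioi 0), f t ≤ G ε := by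
      filter_upwards [self_mem_nhdsWithin] with ε hε
      exact (yudovich_key T C hT hC f hf_cont hf_nonneg hf p hp ε hε t ht).le
    have hle : f t ≤ G 0 := ge_of_tendsto htend hev
    simpa [hG_def] using hle
  refine ⟨part1, ?_⟩
  intro h0 t ht htC
  have hCt1 : C * t < 1 := by
    rw [lt_div_iff₀ hC] at htC; linarith
  have hCt0 : 0 ≤ C * t := mul_nonneg hC.le ht.1
  have hb : ∀ p : ℝ, 2 ≤ p → f t ≤ (C * t) ^ p := by
    intro p hp
    have hp0 : (0:ℝ) < p := by linarith
    have := part1 t ht p hp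
    rwa [h0, Real.zero_rpow (one_div_ne_zero hp0.ne'), zero_add] at this
  have htend : Filter.Tendsto (fun p : ℝ => (C * t) ^ p) Filter.atTop (nhds 0) :=
    tendsto_rpow_atTop_of_base_lt_one (C * t) (by linarith) hCt1
  have hle : f t ≤ 0 := ge_of_tendsto htend
    (by filter_upwards [Filter.eventually_ge_atTop (2:ℝ)] with p hp using hb p hp)
  exact le_antisymm hle (hf_nonneg t ht)
end
end

section
/- Let X be a real normed vector space equipped with its Borel σ-algebra, let ρ be a measure on X, and let Φ : [0,∞) → (X → X) be a family of maps satisfying: (i) Φ(0) is the identity and Φ(t+τ) = Φ(t) ∘ Φ(τ) for all t, τ ≥ 0; (ii) for all R, T > 0 there exists C(R,T) > 0 such that Φ(t)(B_R) ⊆ B_{C(R,T)} for all t ∈ [0,T], where B_r denotes the closed ball of radius r centered at the origin; (iii) for every R > 0 there exists t_*(R) > 0 such that for every set A ⊆ B_R with ρ(A) = 0 and every t ∈ [0, t_*(R)], one has ρ(Φ(t)(A)) = 0 (the measure of an arbitrary set being understood via the associated outer measure). Then for every t ≥ 0 and every set A ⊆ X with ρ(A) = 0, one has ρ(Φ(t)(A))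 = 0. -/
open MeasureTheory

noncomputable section

/-- Abstract iteration argument for quasi-invariance: if a semiflow `Φ` on a normed space `X`
maps balls to balls on compact time intervals, and preserves `ρ`-null subsets of each ball for
a short (radius-dependent) positive time, then `Φ(t)` preserves all `ρ`-null sets for every
`t ≥ 0`.  The measure of an arbitrary set is understood via the outer measure. -/
theorem null_set_preservation_iteration
    {X : Type*} [NormedAddCommGroup X] [NormedSpace ℝ X]
    [MeasurableSpace X] [BorelSpace X]
    (ρ : Measure X) (Φ : ℝ → X → X)
    (h0 : Φ 0 = id)
    (hsemi : ∀ t τ : ℝ, 0 ≤ t → 0 ≤ τ → Φ (t + τ) = Φ t ∘ Φ τ)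
    (hgrowth : ∀ R T : ℝ, 0 < R → 0 < T → ∃ C : ℝ, 0 < C ∧
      ∀ t ∈ Set.Icc (0:ℝ) T, ∀ x ∈ Metric.closedBall (0:X) R,
        Φ t x ∈ Metric.closedBall (0:X) C)
    (hshort : ∀ R : ℝ, 0 < R → ∃ tstar : ℝ, 0 < tstar ∧
      ∀ A : Set X, A ⊆ Metric.closedBall (0:X) R → ρ A = 0 →
        ∀ t ∈ Set.Icc (0:ℝ) tstar, ρ (Φ t '' A) = 0) :
    ∀ t : ℝ, 0 ≤ t → ∀ A : Set X, ρ A = 0 → ρ (Φ t '' A) = 0 := by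
  have key : ∀ t : ℝ, 0 < t → ∀ R : ℝ, 0 < R → ∀ A : Set X,
      A ⊆ Metric.closedBall (0:X) R → ρ A = 0 → ρ (Φ t '' A) = 0 := by
    intro t ht R hR A hAR hA
    obtain ⟨C, hC, hCb⟩ := hgrowth R t hR ht
    set R' := max R C with hR'
    have hR'pos : 0 < R' := lt_of_lt_of_le hR (le_max_left _ _)
    obtain ⟨tstar, hts, hpres⟩ := hshort R' hR'pos
    have hsub : ∀ s, 0 ≤ s → s ≤ t → Φ s '' A ⊆ Metric.closedBall (0:X) R' := by
      intro s hs0 hst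
      rintro _ ⟨x, hx, rfl⟩
      exact Metric.closedBall_subset_closedBall (le_max_right R C)
        (hCb s ⟨hs0, hst⟩ x (hAR hx))
    have main : ∀ n : ℕ, ∀ s : ℝ, 0 ≤ s → s ≤ t → s ≤ n * tstar →
        ρ (Φ s '' A) = 0 := by
      intro n
      induction n with
      | zero =>
        intro s hs0 hst hsn
        simp only [Nat.cast_zero, zero_mul] at hsn
        have hs : s = 0 := le_antisymm hsn hs0
        subst hs
        simpa [h0] using hA
      | succ n ih =>
        intro s hs0 hst hsn
        by_cases hcase : s ≤ n * tstar
        · exact ih s hs0 hst hcase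
        · push_neg at hcase
          set m := (n : ℝ) * tstar with hm
          have hm0 : 0 ≤ m := by positivity
          have hms : m ≤ s := hcase.le
          have hnull : ρ (Φ m '' A) = 0 := ih m hm0 (hms.trans hst) le_rfl
          have hsubm : Φ m '' A ⊆ Metric.closedBall (0:X) R' :=
            hsub m hm0 (hms.trans hst)
          have hdecomp : Φ s = Φ (s - m) ∘ Φ m := by
            have h := hsemi (s - m) m (by linarith) hm0
            simpa [sub_add_cancel] using h
          have himg : Φ s '' A = Φ (s - m) '' (Φ m '' A) := by
            rw [hdecomp, Set.image_comp]
          rw [himg]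
          apply hpres _ hsubm hnull
          push_cast at hsn
          constructor
          · linarith
          · linarith
    obtain ⟨n, hn⟩ := exists_nat_ge (t / tstar)
    have htn : t ≤ n * tstar := by
      rw [div_le_iff₀ hts] at hn
      linarith
    exact main n t ht.le le_rfl htn
  intro t ht A hA
  rcases eq_or_lt_of_le ht with rfl | htpos
  · simpa [h0] using hA
  · have hdec : A = ⋃ n : ℕ, A ∩ Metric.closedBall (0:X) (n + 1) := by
      ext x
      simp only [Set.mem_iUnion, Set.mem_inter_iff, Metric.mem_closedBall,
        dist_zero_right]
      constructor
      · intro hx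
        obtain ⟨n, hn⟩ := exists_nat_ge ‖x‖
        exact ⟨n, hx, by linarith⟩
      · rintro ⟨n, hx, -⟩; exact hx
    rw [hdec, Set.image_iUnion]
    refine measure_iUnion_null fun n => ?_
    exact key t htpos (n + 1) (by positivity) _ Set.inter_subset_right
      (measure_mono_null Set.inter_subset_left hA)
end
end

section
/- Let σ ≥ 1 be a real number. There exists a constant C > 0 such that for every function a : ℤ³ → [0,∞), ∑_{n∈ℤ³} ⟨n⟩^{2(σ−1)} ((a⋆a⋆a)(n))² ≤ C (∑_{n∈ℤ³} ⟨n⟩^{2σ} a(n)²) · (∑_{n∈ℤ³} ⟨n⟩² a(n)²)², where (a⋆a⋆a)(n) = ∑_{(m,k)∈ℤ³×ℤ³} a(m)·a(k)·a(n−m−k) and all sums are taken in [0,∞]. -/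
/-!
Call `J` the level of `n` when `16 ^ J ≤ ⟨n⟩² < 16 ^ (J + 1)`. Sorting each triple `(m, k, l)` by
the level of its largest entry bounds the cube `a ⋆ a ⋆ a` by three times a sum over `J` of
high–low–low pieces `a_J ⋆ a_{≤J} ⋆ a_{≤J}`. On such a piece `⟨n⟩² ≤ 144 · 16 ^ J`, so the weight
`⟨n⟩^{2(σ-1)}` moves onto the high factor, and Young's inequality `ℓ² ⋆ ℓ¹ ⋆ ℓ¹ → ℓ²` applies.
In three dimensions `H¹` does not embed in `ℓ¹`, but Cauchy–Schwarz and lattice-point counting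
bound `‖a_{≤J}‖²_{ℓ¹}` by `4 ^ J` times the `H¹` energy of `a_{≤J}` with level `i` damped by
`2 ^ (i - J)`; the two losses `4 ^ J` are paid by the spare factor `⟨m⟩² ≥ 16 ^ J` of the high
factor. The damped energies are bounded by `‖a‖²_{H¹}` and sum over `J` to `2 ‖a‖²_{H¹}`, which
is what Minkowski's inequality over `J` needs.
-/

open scoped ENNReal NNReal BigOperators

noncomputable section

open Set

namespace ENNReal

variable {ι κ : Type*}

theorem tsum_mul_tsum (a b : ι → ℝ≥0∞) : (∑' i, a i) * ∑' j, b j = ∑' i, ∑' j, a i * b j := by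
  rw [← ENNReal.tsum_mul_right]
  simp_rw [← ENNReal.tsum_mul_left]

theorem two_mul_le_add_of_sq_le_mul {a b r : ℝ≥0∞} (h : r ^ 2 ≤ a * b) : 2 * r ≤ a + b := by
  rcases eq_or_ne a ∞ with rfl | ha
  · simp
  rcases eq_or_ne b ∞ with rfl | hb
  · simp
  have hr : r ≠ ∞ := by
    rintro rfl
    exact (mul_ne_top ha hb) (top_unique (by simpa using h))
  lift a to ℝ≥0 using ha
  lift b to ℝ≥0 using hb
  lift r to ℝ≥0 using hr
  exact_mod_cast _root_.two_mul_le_add_of_sq_le_mul zero_le zero_le (by exact_mod_cast h)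

theorem tsum_tsum_le_mul_of_two_mul_le (y : ι → ι → ℝ≥0∞) (a b : ι → ℝ≥0∞)
    (h : ∀ i j, 2 * y i j ≤ a i * b j + a j * b i) :
    ∑' i, ∑' j, y i j ≤ (∑' i, a i) * ∑' i, b i := by
  refine (ENNReal.mul_le_mul_iff_right two_ne_zero ofNat_ne_top).1 ?_
  calc 2 * ∑' i, ∑' j, y i j = ∑' i, ∑' j, 2 * y i j := by simp_rw [ENNReal.tsum_mul_left]
    _ ≤ ∑' i, ∑' j, (a i * b j + a j * b i) :=
      ENNReal.tsum_le_tsum fun i => ENNReal.tsum_le_tsum (h i)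
    _ = 2 * ((∑' i, a i) * ∑' i, b i) := by
      simp_rw [ENNReal.tsum_add]
      rw [ENNReal.tsum_comm (f := fun i j => a j * b i), ← tsum_mul_tsum, two_mul]

theorem sq_tsum_le_of_sq_le_mul (x a b : ι → ℝ≥0∞) (h : ∀ i, x i ^ 2 ≤ a i * b i) :
    (∑' i, x i) ^ 2 ≤ (∑' i, a i) * ∑' i, b i := by
  rw [sq, tsum_mul_tsum]
  refine tsum_tsum_le_mul_of_two_mul_le _ a b fun i j => two_mul_le_add_of_sq_le_mul ?_
  calc (x i * x j) ^ 2 = x i ^ 2 * x j ^ 2 := mul_pow _ _ _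
    _ ≤ (a i * b i) * (a j * b j) := mul_le_mul' (h i) (h j)
    _ = (a i * b j) * (a j * b i) := by ring

/-- Minkowski's inequality in `ℓ²(c)`, in a form without square roots. -/
theorem tsum_mul_sq_tsum_le (c : κ → ℝ≥0∞) (F : ι → κ → ℝ≥0∞) (a b : ι → ℝ≥0∞)
    (h : ∀ i, ∑' n, c n * F i n ^ 2 ≤ a i * b i) :
    ∑' n, c n * (∑' i, F i n) ^ 2 ≤ (∑' i, a i) * ∑' i, b i := by
  have expand : ∑' n, c n * (∑' i, F i n) ^ 2 = ∑' i, ∑' j, ∑' n, c n * F i n * F j n := by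
    simp_rw [sq, tsum_mul_tsum, ← ENNReal.tsum_mul_left, mul_assoc]
    rw [ENNReal.tsum_comm]
    exact tsum_congr fun i => ENNReal.tsum_comm
  rw [expand]
  refine tsum_tsum_le_mul_of_two_mul_le _ a b fun i j => two_mul_le_add_of_sq_le_mul ?_
  calc (∑' n, c n * F i n * F j n) ^ 2
      ≤ (∑' n, c n * F i n ^ 2) * ∑' n, c n * F j n ^ 2 :=
        sq_tsum_le_of_sq_le_mul _ _ _ fun n => le_of_eq (by ring)
    _ ≤ (a i * b i) * (a j * b j) := mul_le_mul' (h i) (h j)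
    _ = (a i * b j) * (a j * b i) := by ring

theorem tsum_tsum_indicator_preimage (ℓ : κ → ι) (g : κ → ℝ≥0∞) :
    ∑' i, ∑' n, (ℓ ⁻¹' {i}).indicator g n = ∑' n, g n := by
  simp_rw [← tsum_subtype]
  exact ENNReal.tsum_fiberwise g ℓ

theorem tsum_comp_eq_tsum_encard_mul (ℓ : κ → ι) (g : ι → ℝ≥0∞) :
    ∑' n, g (ℓ n) = ∑' i, (ℓ ⁻¹' {i}).encard * g i := by
  rw [← tsum_tsum_indicator_preimage ℓ]
  refine tsum_congr fun i => ?_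
  rw [← tsum_subtype, ← ENNReal.tsum_set_const]
  exact tsum_congr fun n => congrArg g n.2

theorem tsum_geometric_inv_two_ge (i : ℕ) :
    ∑' j, (if i ≤ j then (2⁻¹ : ℝ≥0∞) ^ j else 0) = 2 * 2⁻¹ ^ i := by
  have hsupp : (Function.support fun j => if i ≤ j then (2⁻¹ : ℝ≥0∞) ^ j else 0) ⊆
      range (· + i) := fun j hj => by
    have hij : i ≤ j := by
      by_contra h
      exact hj (if_neg h)
    exact ⟨j - i, Nat.sub_add_cancel hij⟩
  rw [← (add_left_injective i).tsum_eq hsupp]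
  simp [pow_add, ENNReal.tsum_mul_right, ENNReal.tsum_geometric, ENNReal.one_sub_inv_two]

end ENNReal

section Convolution

variable {G : Type*} [AddCommGroup G]

def dconv (f g : G → ℝ≥0∞) (n : G) : ℝ≥0∞ := ∑' m, f m * g (n - m)

def dconv3 (f g h : G → ℝ≥0∞) (n : G) : ℝ≥0∞ :=
  ∑' p : G × G, f p.1 * g p.2 * h (n - p.1 - p.2)

theorem tsum_dconv (f g : G → ℝ≥0∞) : ∑' n, dconv f g n = (∑' n, f n) * ∑' n, g n := by
  simp only [dconv]
  rw [ENNReal.tsum_comm, ← ENNReal.tsum_mul_right]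
  refine tsum_congr fun m => ?_
  rw [ENNReal.tsum_mul_left]
  exact congrArg _ ((Equiv.subRight m).tsum_eq g)

theorem tsum_dconv_sq_le (f g : G → ℝ≥0∞) :
    ∑' n, dconv f g n ^ 2 ≤ (∑' n, f n ^ 2) * (∑' n, g n) ^ 2 := by
  calc ∑' n, dconv f g n ^ 2 ≤ ∑' n, dconv (fun m => f m ^ 2) g n * ∑' m, g m := by
        refine ENNReal.tsum_le_tsum fun n => ?_
        rw [← (Equiv.subLeft n).tsum_eq g]
        refine ENNReal.sq_tsum_le_of_sq_le_mul _ _ _ fun m => le_of_eq ?_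
        rw [Equiv.subLeft_apply]
        ring
    _ = (∑' n, f n ^ 2) * (∑' n, g n) ^ 2 := by
      rw [ENNReal.tsum_mul_right, tsum_dconv, sq (∑' n, g n), mul_assoc]

theorem dconv3_eq_dconv_dconv (f g h : G → ℝ≥0∞) : dconv3 f g h = dconv f (dconv g h) := by
  ext n
  simp only [dconv3, dconv]
  rw [ENNReal.tsum_prod (f := fun m k => f m * g k * h (n - m - k))]
  simp only [← ENNReal.tsum_mul_left, mul_assoc, sub_sub]

theorem tsum_dconv3_sq_le (f g h : G → ℝ≥0∞) :
    ∑' n, dconv3 f g h n ^ 2 ≤ (∑' n, f n ^ 2) * ((∑' n, g n) * ∑' n, h n) ^ 2 := by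
  rw [dconv3_eq_dconv_dconv, ← tsum_dconv]
  exact tsum_dconv_sq_le f (dconv g h)

theorem dconv3_comm_left (f g h : G → ℝ≥0∞) : dconv3 f g h = dconv3 g f h := by
  ext n
  refine ((Equiv.prodComm G G).tsum_eq _).symm.trans (tsum_congr fun p => ?_)
  simp only [Equiv.prodComm_apply, Prod.fst_swap, Prod.snd_swap]
  rw [sub_right_comm]
  ring

theorem dconv3_comm_outer (f g h : G → ℝ≥0∞) : dconv3 f g h = dconv3 h g f := by
  ext n
  have hinv : Function.Involutive fun p : G × G => (n - p.1 - p.2, p.2) := fun p =>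
    Prod.ext (by dsimp only; abel) rfl
  refine ((hinv.toPerm _).tsum_eq _).symm.trans (tsum_congr fun p => ?_)
  have hp : n - (n - p.1 - p.2) - p.2 = p.1 := by abel
  simp only [Function.Involutive.coe_toPerm, hp]
  ring

def highLowLow (ℓ : G → ℕ) (f : G → ℝ≥0∞) (J : ℕ) : G → ℝ≥0∞ :=
  dconv3 ((ℓ ⁻¹' {J}).indicator f) ((ℓ ⁻¹' Iic J).indicator f) ((ℓ ⁻¹' Iic J).indicator f)

theorem dconv3_le_three_mul_tsum_highLowLow (ℓ : G → ℕ) (f : G → ℝ≥0∞) (n : G) :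
    dconv3 f f f n ≤ 3 * ∑' J, highLowLow ℓ f J n := by
  set S := fun J => (ℓ ⁻¹' {J}).indicator f
  set L := fun J => (ℓ ⁻¹' Iic J).indicator f
  have key : ∀ m k l, f m * f k * f l ≤
      ∑' J, (S J m * L J k * L J l + L J m * S J k * L J l + L J m * L J k * S J l) := by
    intro m k l
    obtain ⟨M, hm, hk, hl, hmax⟩ : ∃ M, ℓ m ≤ M ∧ ℓ k ≤ M ∧ ℓ l ≤ M ∧
        (ℓ m = M ∨ ℓ k = M ∨ ℓ l = M) := ⟨max (ℓ m) (max (ℓ k) (ℓ l)), by omega⟩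
    refine le_trans ?_ (ENNReal.le_tsum M)
    have low : ∀ x, ℓ x ≤ M → L M x = f x := fun x hx =>
      indicator_of_mem (show x ∈ ℓ ⁻¹' Iic M from hx) f
    have shell : ∀ x, ℓ x = M → S M x = f x := fun x hx =>
      indicator_of_mem (show x ∈ ℓ ⁻¹' {M} from hx) f
    rw [low m hm, low k hk, low l hl]
    rcases hmax with h | h | h
    · rw [shell m h]
      exact le_add_right (le_add_right le_rfl)
    · rw [shell k h]
      exact le_add_right (le_add_left le_rfl)
    · rw [shell l h]
      exact le_add_left le_rfl
  calc dconv3 f f f n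
      ≤ ∑' p : G × G, ∑' J, (S J p.1 * L J p.2 * L J (n - p.1 - p.2) +
          L J p.1 * S J p.2 * L J (n - p.1 - p.2) + L J p.1 * L J p.2 * S J (n - p.1 - p.2)) :=
        ENNReal.tsum_le_tsum fun p => key _ _ _
    _ = ∑' J, (dconv3 (S J) (L J) (L J) n + dconv3 (L J) (S J) (L J) n +
          dconv3 (L J) (L J) (S J) n) := by
        rw [ENNReal.tsum_comm]
        simp only [dconv3, ENNReal.tsum_add]
    _ = 3 * ∑' J, highLowLow ℓ f J n := by
        rw [← ENNReal.tsum_mul_left]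
        refine tsum_congr fun J => ?_
        rw [dconv3_comm_left (L J) (S J), dconv3_comm_outer (L J) (L J) (S J)]
        simp only [highLowLow, S, L]
        ring

end Convolution

section Lattice

variable {d : ℕ}

def bracketSq (n : Fin d → ℤ) : ℕ := 1 + ∑ i, (n i).natAbs ^ 2

/-- Base `16` makes the `ℓ¹` loss `⟨n⟩^{1/2}` at level `J` the integer power `2 ^ J`. -/
def level (n : Fin d → ℤ) : ℕ := Nat.log 16 (bracketSq n)

theorem bracketSq_pos (n : Fin d → ℤ) : 0 < bracketSq n := by
  unfold bracketSq
  omega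

theorem pow_level_le_bracketSq (n : Fin d → ℤ) : 16 ^ level n ≤ bracketSq n :=
  Nat.pow_log_le_self 16 (bracketSq_pos n).ne'

theorem bracketSq_lt_pow_level_succ (n : Fin d → ℤ) : bracketSq n < 16 ^ (level n + 1) :=
  Nat.lt_pow_succ_log_self (by norm_num) _

theorem bracketSq_cast (n : Fin 3 → ℤ) : (bracketSq n : ℝ) = 1 + nsqR n := by
  simp [bracketSq, nsqR, Nat.cast_natAbs, sq_abs]

theorem bracketSq_add_add_le (m k l : Fin d → ℤ) :
    bracketSq (m + k + l) ≤ 3 * (bracketSq m + bracketSq k + bracketSq l) := by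
  have hc : ∀ c, ((m + k + l) c).natAbs ^ 2 ≤
      3 * ((m c).natAbs ^ 2 + (k c).natAbs ^ 2 + (l c).natAbs ^ 2) := by
    intro c
    zify
    simp only [sq_abs, Pi.add_apply]
    nlinarith [sq_nonneg (m c - k c), sq_nonneg (m c - l c), sq_nonneg (k c - l c)]
  have := Finset.sum_le_sum fun c (_ : c ∈ Finset.univ) => hc c
  simp only [← Finset.mul_sum, Finset.sum_add_distrib] at this
  unfold bracketSq
  omega

theorem natAbs_le_of_bracketSq_le {R : ℕ} {n : Fin d → ℤ} (h : bracketSq n ≤ R ^ 2) (i : Fin d) :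
    (n i).natAbs ≤ R := by
  have hi := Finset.single_le_sum (f := fun j => (n j).natAbs ^ 2) (fun j _ => Nat.zero_le _)
    (Finset.mem_univ i)
  unfold bracketSq at h
  exact (Nat.pow_le_pow_iff_left two_ne_zero).1 (by omega)

theorem encard_bracketSq_le (R : ℕ) :
    {n : Fin d → ℤ | bracketSq n ≤ R ^ 2}.encard ≤ (2 * R + 1) ^ d := by
  calc {n : Fin d → ℤ | bracketSq n ≤ R ^ 2}.encard
      ≤ ((Finset.Icc (fun _ => -(R : ℤ)) (fun _ => (R : ℤ)) : Finset (Fin d → ℤ)) :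
          Set (Fin d → ℤ)).encard := by
        refine Set.encard_le_encard fun n hn => ?_
        have hR := natAbs_le_of_bracketSq_le (R := R) hn
        simp only [Finset.coe_Icc, mem_Icc]
        exact ⟨fun i => show -(R : ℤ) ≤ n i by have := hR i; omega,
          fun i => show n i ≤ R by have := hR i; omega⟩
    _ = (2 * R + 1) ^ d := by
        rw [Set.encard_coe_eq_coe_finsetCard, Pi.card_Icc]
        simp only [Int.card_Icc, Finset.prod_const, Finset.card_univ, Fintype.card_fin]
        rw [show ((R : ℤ) + 1 - -(R : ℤ)).toNat = 2 * R + 1 by omega]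
        push_cast
        rfl

theorem encard_level_preimage_le (i : ℕ) :
    (level ⁻¹' {i} : Set (Fin d → ℤ)).encard ≤ (9 * 4 ^ i) ^ d := by
  calc (level ⁻¹' {i} : Set (Fin d → ℤ)).encard
      ≤ {n : Fin d → ℤ | bracketSq n ≤ (4 ^ (i + 1)) ^ 2}.encard := by
        refine Set.encard_le_encard fun n (hn : level n = i) => ?_
        have h := bracketSq_lt_pow_level_succ n
        rw [hn] at h
        show bracketSq n ≤ (4 ^ (i + 1)) ^ 2
        rw [← pow_mul, mul_comm, pow_mul]
        norm_num
        omega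
    _ ≤ ((2 * 4 ^ (i + 1) + 1 : ℕ) : ℕ∞) ^ d := by exact_mod_cast encard_bracketSq_le _
    _ ≤ (9 * 4 ^ i) ^ d := by
        have : 2 * 4 ^ (i + 1) + 1 ≤ 9 * 4 ^ i := by
          have := Nat.one_le_pow i 4 (by norm_num)
          rw [pow_succ]
          omega
        exact_mod_cast Nat.pow_le_pow_left this d

theorem highLowLow_level_eq_zero (f : (Fin d → ℤ) → ℝ≥0∞) {J : ℕ} {n : Fin d → ℤ}
    (hn : 144 * 16 ^ J < bracketSq n) : highLowLow level f J n = 0 := by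
  refine ENNReal.tsum_eq_zero.2 fun p => ?_
  have low : ∀ m : Fin d → ℤ, level m ≤ J → bracketSq m < 16 * 16 ^ J := fun m hm =>
    (bracketSq_lt_pow_level_succ m).trans_le
      (by rw [← pow_succ']; exact Nat.pow_le_pow_right (by norm_num) (by omega))
  by_cases h1 : level p.1 ≤ J
  · by_cases h2 : level p.2 ≤ J
    · by_cases h3 : level (n - p.1 - p.2) ≤ J
      · have h := bracketSq_add_add_le p.1 p.2 (n - p.1 - p.2)
        rw [show p.1 + p.2 + (n - p.1 - p.2) = n by abel] at h
        have := low _ h1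
        have := low _ h2
        have := low _ h3
        omega
      · rw [indicator_of_notMem (show n - p.1 - p.2 ∉ level ⁻¹' Iic J from h3), mul_zero]
    · rw [indicator_of_notMem (show p.2 ∉ level ⁻¹' Iic J from h2), mul_zero, zero_mul]
  · rw [indicator_of_notMem (show p.1 ∉ level ⁻¹' {J} from fun h => h1 (le_of_eq h)),
      zero_mul, zero_mul]

theorem bracketSq_rpow_mul_highLowLow_sq_le {σ : ℝ} (hσ : 1 ≤ σ) (f : (Fin d → ℤ) → ℝ≥0∞)
    (J : ℕ) (n : Fin d → ℤ) :
    (bracketSq n : ℝ≥0∞) ^ (σ - 1) * highLowLow level f J n ^ 2 * 16 ^ J ≤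
      144 ^ (σ - 1) * (((16 : ℝ≥0∞) ^ J) ^ σ * highLowLow level f J n ^ 2) := by
  by_cases hn : 144 * 16 ^ J < bracketSq n
  · simp [highLowLow_level_eq_zero f hn]
  have hn' : (bracketSq n : ℝ≥0∞) ≤ 144 * 16 ^ J := by exact_mod_cast not_lt.1 hn
  calc (bracketSq n : ℝ≥0∞) ^ (σ - 1) * highLowLow level f J n ^ 2 * 16 ^ J
      ≤ (144 * 16 ^ J) ^ (σ - 1) * highLowLow level f J n ^ 2 * 16 ^ J := by
        gcongr
    _ = 144 ^ (σ - 1) * ((((16 : ℝ≥0∞) ^ J) ^ (σ - 1) * ((16 : ℝ≥0∞) ^ J) ^ (1 : ℝ)) *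
          highLowLow level f J n ^ 2) := by
        rw [ENNReal.mul_rpow_of_nonneg _ _ (by linarith), ENNReal.rpow_one]
        ring
    _ = 144 ^ (σ - 1) * (((16 : ℝ≥0∞) ^ J) ^ σ * highLowLow level f J n ^ 2) := by
        rw [← ENNReal.rpow_add _ _ (pow_ne_zero _ (by norm_num))
          (ENNReal.pow_ne_top ENNReal.ofNat_ne_top), sub_add_cancel]

def shellEnergy (σ : ℝ) (f : (Fin d → ℤ) → ℝ≥0∞) (J : ℕ) : ℝ≥0∞ :=
  ∑' n, (level ⁻¹' {J}).indicator (fun n => (bracketSq n : ℝ≥0∞) ^ σ * f n ^ 2) n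

def lowEnergy (f : (Fin d → ℤ) → ℝ≥0∞) (J : ℕ) : ℝ≥0∞ :=
  ∑' n, (level ⁻¹' Iic J).indicator
    (fun n => 2⁻¹ ^ J * 2 ^ level n * (bracketSq n : ℝ≥0∞) * f n ^ 2) n

theorem tsum_shellEnergy (σ : ℝ) (f : (Fin d → ℤ) → ℝ≥0∞) :
    ∑' J, shellEnergy σ f J = ∑' n, (bracketSq n : ℝ≥0∞) ^ σ * f n ^ 2 :=
  ENNReal.tsum_tsum_indicator_preimage level _

theorem rpow_mul_tsum_shell_sq_le {σ : ℝ} (hσ : 0 ≤ σ) (f : (Fin d → ℤ) → ℝ≥0∞) (J : ℕ) :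
    ((16 : ℝ≥0∞) ^ J) ^ σ * ∑' n, (level ⁻¹' {J}).indicator f n ^ 2 ≤ shellEnergy σ f J := by
  rw [shellEnergy, ← ENNReal.tsum_mul_left]
  refine ENNReal.tsum_le_tsum fun n => ?_
  by_cases h : level n = J
  · rw [indicator_of_mem (show n ∈ level ⁻¹' {J} from h),
      indicator_of_mem (show n ∈ level ⁻¹' {J} from h)]
    gcongr
    rw [← h]
    exact_mod_cast pow_level_le_bracketSq n
  · simp [indicator_of_notMem (show n ∉ level ⁻¹' {J} from h)]

theorem lowEnergy_le (f : (Fin d → ℤ) → ℝ≥0∞) (J : ℕ) :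
    lowEnergy f J ≤ ∑' n, (bracketSq n : ℝ≥0∞) * f n ^ 2 := by
  refine ENNReal.tsum_le_tsum fun n => ?_
  by_cases h : level n ≤ J
  · rw [indicator_of_mem (show n ∈ level ⁻¹' Iic J from h)]
    have : (2⁻¹ : ℝ≥0∞) ^ J * 2 ^ level n ≤ 1 := calc
      (2⁻¹ : ℝ≥0∞) ^ J * 2 ^ level n ≤ 2⁻¹ ^ level n * 2 ^ level n := by
        gcongr ?_ * _
        exact pow_le_pow_right_of_le_one' (ENNReal.inv_le_one.2 one_le_two) h
      _ = 1 := by rw [← mul_pow, ENNReal.inv_mul_cancel two_ne_zero ENNReal.ofNat_ne_top, one_pow]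
    calc 2⁻¹ ^ J * 2 ^ level n * (bracketSq n : ℝ≥0∞) * f n ^ 2
        ≤ 1 * (bracketSq n : ℝ≥0∞) * f n ^ 2 := by gcongr
      _ = _ := by rw [one_mul]
  · simp [indicator_of_notMem (show n ∉ level ⁻¹' Iic J from h)]

theorem tsum_lowEnergy (f : (Fin d → ℤ) → ℝ≥0∞) :
    ∑' J, lowEnergy f J = 2 * ∑' n, (bracketSq n : ℝ≥0∞) * f n ^ 2 := by
  unfold lowEnergy
  rw [ENNReal.tsum_comm, ← ENNReal.tsum_mul_left]
  refine tsum_congr fun n => ?_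
  calc ∑' J, (level ⁻¹' Iic J).indicator
        (fun n => 2⁻¹ ^ J * 2 ^ level n * (bracketSq n : ℝ≥0∞) * f n ^ 2) n
      = (∑' J, if level n ≤ J then (2⁻¹ : ℝ≥0∞) ^ J else 0) *
          (2 ^ level n * (bracketSq n : ℝ≥0∞) * f n ^ 2) := by
        rw [← ENNReal.tsum_mul_right]
        refine tsum_congr fun J => ?_
        by_cases h : level n ≤ J
        · rw [indicator_of_mem (show n ∈ level ⁻¹' Iic J from h), if_pos h]
          ring
        · rw [indicator_of_notMem (show n ∉ level ⁻¹' Iic J from h), if_neg h, zero_mul]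
    _ = 2 * ((2⁻¹ * 2) ^ level n * ((bracketSq n : ℝ≥0∞) * f n ^ 2)) := by
        rw [ENNReal.tsum_geometric_inv_two_ge]
        ring
    _ = 2 * ((bracketSq n : ℝ≥0∞) * f n ^ 2) := by
        rw [ENNReal.inv_mul_cancel two_ne_zero ENNReal.ofNat_ne_top, one_pow, one_mul]

end Lattice

theorem tsum_indicator_inv_pow_level_le (J : ℕ) :
    ∑' n : Fin 3 → ℤ, (Iic J).indicator (fun i => ((32 : ℝ≥0∞) ^ i)⁻¹) (level n) ≤
      1458 * 2 ^ J := by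
  have hlevel : ∀ i, ((level ⁻¹' {i} : Set (Fin 3 → ℤ)).encard : ℝ≥0∞) * ((32 : ℝ≥0∞) ^ i)⁻¹ ≤
      729 * 2 ^ i := fun i => calc
    _ ≤ (9 * 4 ^ i) ^ 3 * ((32 : ℝ≥0∞) ^ i)⁻¹ := by
        gcongr
        exact_mod_cast ENat.toENNReal_le.2 (encard_level_preimage_le i)
    _ = 729 * 2 ^ i * ((32 : ℝ≥0∞) ^ i * (32 ^ i)⁻¹) := by
        rw [mul_pow, ← pow_mul, mul_comm i 3, pow_mul]
        rw [show ((4 : ℝ≥0∞) ^ 3) ^ i = 2 ^ i * 32 ^ i by rw [← mul_pow]; norm_num]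
        ring
    _ = 729 * 2 ^ i := by
        rw [ENNReal.mul_inv_cancel (pow_ne_zero _ (by norm_num))
          (ENNReal.pow_ne_top ENNReal.ofNat_ne_top), mul_one]
  have hgeom : ∑ i ∈ Finset.Iic J, 2 ^ i < 2 ^ (J + 1) :=
    Nat.geomSum_lt le_rfl fun k hk => Nat.lt_succ_of_le (Finset.mem_Iic.1 hk)
  calc ∑' n : Fin 3 → ℤ, (Iic J).indicator (fun i => ((32 : ℝ≥0∞) ^ i)⁻¹) (level n)
      = ∑' i, ((level ⁻¹' {i} : Set (Fin 3 → ℤ)).encard : ℝ≥0∞) *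
          (Iic J).indicator (fun i => ((32 : ℝ≥0∞) ^ i)⁻¹) i :=
        ENNReal.tsum_comp_eq_tsum_encard_mul level _
    _ ≤ ∑' i, (Iic J).indicator (fun i => 729 * (2 : ℝ≥0∞) ^ i) i := by
        refine ENNReal.tsum_le_tsum fun i => ?_
        by_cases h : i ∈ Iic J
        · simpa only [indicator_of_mem h] using hlevel i
        · simp only [indicator_of_notMem h, mul_zero, le_refl]
    _ = 729 * ∑ i ∈ Finset.Iic J, (2 : ℝ≥0∞) ^ i := by
        rw [← Finset.coe_Iic, ← sum_eq_tsum_indicator, Finset.mul_sum]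
    _ ≤ 729 * (2 * 2 ^ J) := by
        rw [← pow_succ']
        gcongr
        exact_mod_cast hgeom.le
    _ = 1458 * 2 ^ J := by ring

theorem sq_tsum_low_le (f : (Fin 3 → ℤ) → ℝ≥0∞) (J : ℕ) :
    (∑' n, (level ⁻¹' Iic J).indicator f n) ^ 2 ≤ 1458 * 4 ^ J * lowEnergy f J := by
  calc (∑' n, (level ⁻¹' Iic J).indicator f n) ^ 2
      ≤ (∑' n, 2 ^ J * (Iic J).indicator (fun i => ((32 : ℝ≥0∞) ^ i)⁻¹) (level n)) *
          lowEnergy f J := by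
        refine ENNReal.sq_tsum_le_of_sq_le_mul _ _ _ fun n => ?_
        by_cases h : level n ≤ J
        · have hn : n ∈ level ⁻¹' Iic J := h
          rw [indicator_of_mem hn, indicator_of_mem hn,
            indicator_of_mem (show level n ∈ Iic J from h)]
          have h16 : (16 : ℝ≥0∞) ^ level n ≤ bracketSq n := by
            exact_mod_cast pow_level_le_bracketSq n
          calc f n ^ 2 = (2 ^ J * 2⁻¹ ^ J) *
                ((2 ^ level n * 16 ^ level n) * ((32 : ℝ≥0∞) ^ level n)⁻¹) * f n ^ 2 := by
                rw [← mul_pow, ENNReal.mul_inv_cancel two_ne_zero ENNReal.ofNat_ne_top, ← mul_pow,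
                  show (2 : ℝ≥0∞) * 16 = 32 by norm_num, ENNReal.mul_inv_cancel
                    (pow_ne_zero _ (by norm_num)) (ENNReal.pow_ne_top ENNReal.ofNat_ne_top)]
                ring
            _ ≤ (2 ^ J * 2⁻¹ ^ J) *
                ((2 ^ level n * bracketSq n) * ((32 : ℝ≥0∞) ^ level n)⁻¹) * f n ^ 2 := by gcongr
            _ = _ := by ring
        · simp [indicator_of_notMem (show n ∉ level ⁻¹' Iic J from h)]
    _ ≤ (2 ^ J * (1458 * 2 ^ J)) * lowEnergy f J := by
        rw [ENNReal.tsum_mul_left]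
        gcongr
        exact tsum_indicator_inv_pow_level_le J
    _ = 1458 * 4 ^ J * lowEnergy f J := by
        rw [show (4 : ℝ≥0∞) = 2 * 2 by norm_num, mul_pow]
        ring

theorem tsum_rpow_mul_highLowLow_sq_le {σ : ℝ} (hσ : 1 ≤ σ) (f : (Fin 3 → ℤ) → ℝ≥0∞) (J : ℕ) :
    ∑' n, (bracketSq n : ℝ≥0∞) ^ (σ - 1) * highLowLow level f J n ^ 2 ≤
      1458 ^ 2 * 144 ^ (σ - 1) * shellEnergy σ f J * lowEnergy f J ^ 2 := by
  set V := highLowLow level f J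
  have h16 : (16 : ℝ≥0∞) ^ J ≠ 0 := pow_ne_zero _ (by norm_num)
  have h16' : (16 : ℝ≥0∞) ^ J ≠ ∞ := ENNReal.pow_ne_top ENNReal.ofNat_ne_top
  refine (ENNReal.mul_le_mul_iff_left h16 h16').1 ?_
  calc (∑' n, (bracketSq n : ℝ≥0∞) ^ (σ - 1) * V n ^ 2) * 16 ^ J
      = ∑' n, (bracketSq n : ℝ≥0∞) ^ (σ - 1) * V n ^ 2 * 16 ^ J := ENNReal.tsum_mul_right.symm
    _ ≤ ∑' n, 144 ^ (σ - 1) * (((16 : ℝ≥0∞) ^ J) ^ σ * V n ^ 2) :=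
        ENNReal.tsum_le_tsum (bracketSq_rpow_mul_highLowLow_sq_le hσ f J)
    _ = 144 ^ (σ - 1) * (((16 : ℝ≥0∞) ^ J) ^ σ * ∑' n, V n ^ 2) := by
        rw [ENNReal.tsum_mul_left, ENNReal.tsum_mul_left]
    _ ≤ 144 ^ (σ - 1) * (((16 : ℝ≥0∞) ^ J) ^ σ *
          ((∑' n, (level ⁻¹' {J}).indicator f n ^ 2) *
            ((∑' n, (level ⁻¹' Iic J).indicator f n) *
              ∑' n, (level ⁻¹' Iic J).indicator f n) ^ 2)) := by
        gcongr
        exact tsum_dconv3_sq_le _ _ _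
    _ = 144 ^ (σ - 1) * ((((16 : ℝ≥0∞) ^ J) ^ σ * ∑' n, (level ⁻¹' {J}).indicator f n ^ 2) *
          ((∑' n, (level ⁻¹' Iic J).indicator f n) ^ 2) ^ 2) := by ring
    _ ≤ 144 ^ (σ - 1) * (shellEnergy σ f J * (1458 * 4 ^ J * lowEnergy f J) ^ 2) := by
        gcongr
        · exact rpow_mul_tsum_shell_sq_le (by linarith) f J
        · exact sq_tsum_low_le f J
    _ = 1458 ^ 2 * 144 ^ (σ - 1) * shellEnergy σ f J * lowEnergy f J ^ 2 * 16 ^ J := by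
        rw [show (16 : ℝ≥0∞) ^ J = (4 ^ J) ^ 2 by rw [← pow_mul, mul_comm, pow_mul]; norm_num]
        ring

theorem tsum_rpow_mul_dconv3_sq_le {σ : ℝ} (hσ : 1 ≤ σ) (f : (Fin 3 → ℤ) → ℝ≥0∞) :
    ∑' n, (bracketSq n : ℝ≥0∞) ^ (σ - 1) * dconv3 f f f n ^ 2 ≤
      18 * 1458 ^ 2 * 144 ^ (σ - 1) * (∑' n, (bracketSq n : ℝ≥0∞) ^ σ * f n ^ 2) *
        (∑' n, (bracketSq n : ℝ≥0∞) * f n ^ 2) ^ 2 := by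
  set H := ∑' n, (bracketSq n : ℝ≥0∞) * f n ^ 2
  set K : ℝ≥0∞ := 1458 ^ 2 * 144 ^ (σ - 1)
  have hpieces : ∑' n, (bracketSq n : ℝ≥0∞) ^ (σ - 1) * (∑' J, highLowLow level f J n) ^ 2 ≤
      (∑' J, lowEnergy f J) * ∑' J, K * shellEnergy σ f J * lowEnergy f J :=
    ENNReal.tsum_mul_sq_tsum_le _ _ _ _ fun J =>
      (tsum_rpow_mul_highLowLow_sq_le hσ f J).trans_eq (by ring)
  have hshells : ∑' J, K * shellEnergy σ f J * lowEnergy f J ≤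
      K * (∑' n, (bracketSq n : ℝ≥0∞) ^ σ * f n ^ 2) * H := calc
    _ ≤ ∑' J, K * shellEnergy σ f J * H :=
        ENNReal.tsum_le_tsum fun J => by gcongr; exact lowEnergy_le f J
    _ = _ := by rw [ENNReal.tsum_mul_right, ENNReal.tsum_mul_left, tsum_shellEnergy]
  calc ∑' n, (bracketSq n : ℝ≥0∞) ^ (σ - 1) * dconv3 f f f n ^ 2
      ≤ ∑' n, 9 * ((bracketSq n : ℝ≥0∞) ^ (σ - 1) * (∑' J, highLowLow level f J n) ^ 2) :=
        ENNReal.tsum_le_tsum fun n => calc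
          _ ≤ (bracketSq n : ℝ≥0∞) ^ (σ - 1) * (3 * ∑' J, highLowLow level f J n) ^ 2 := by
            gcongr
            exact dconv3_le_three_mul_tsum_highLowLow level f n
          _ = _ := by ring
    _ = 9 * ∑' n, (bracketSq n : ℝ≥0∞) ^ (σ - 1) * (∑' J, highLowLow level f J n) ^ 2 :=
        ENNReal.tsum_mul_left
    _ ≤ 9 * (2 * H * (K * (∑' n, (bracketSq n : ℝ≥0∞) ^ σ * f n ^ 2) * H)) := by
        rw [← tsum_lowEnergy]
        gcongr
        exact hpieces.trans (by gcongr)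
    _ = _ := by ring

/-- Nonnegative-majorant Fourier form of the trilinear estimate
`‖u³‖_{H^{σ−1}(𝕋³)} ≲ ‖u‖_{H^σ} ‖u‖²_{H¹}` for `σ ≥ 1`:
`∑ ⟨n⟩^{2(σ−1)} ((a⋆a⋆a)(n))² ≤ C (∑ ⟨n⟩^{2σ} a(n)²)(∑ ⟨n⟩² a(n)²)²`,
with `⟨n⟩² = 1 + |n|²` and all sums taken in `[0,∞]`. -/
theorem trilinear_convolution_estimate (σ : ℝ) (hσ : 1 ≤ σ) :
    ∃ C : ℝ, 0 < C ∧ ∀ a : (Fin 3 → ℤ) → ℝ≥0,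
      ∑' n : Fin 3 → ℤ,
          ENNReal.ofReal ((1 + nsqR n) ^ (σ - 1)) *
            (∑' p : (Fin 3 → ℤ) × (Fin 3 → ℤ),
              (a p.1 : ℝ≥0∞) * (a p.2 : ℝ≥0∞) * (a (n - p.1 - p.2) : ℝ≥0∞))^2
        ≤ ENNReal.ofReal C *
            (∑' n : Fin 3 → ℤ, ENNReal.ofReal ((1 + nsqR n) ^ σ) * (a n : ℝ≥0∞)^2) *
            (∑' n : Fin 3 → ℤ, ENNReal.ofReal (1 + nsqR n) * (a n : ℝ≥0∞)^2)^2 := by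
  refine ⟨18 * 1458 ^ 2 * 144 ^ (σ - 1), by positivity, fun a => ?_⟩
  have hbracket : ∀ n, ENNReal.ofReal (1 + nsqR n) = bracketSq n := fun n => by
    rw [← bracketSq_cast, ENNReal.ofReal_natCast]
  have hweight : ∀ n (s : ℝ), ENNReal.ofReal ((1 + nsqR n) ^ s) = (bracketSq n : ℝ≥0∞) ^ s :=
    fun n s => by
      rw [← ENNReal.ofReal_rpow_of_pos (by rw [← bracketSq_cast]; exact_mod_cast bracketSq_pos n),
        hbracket]
  have hC : ENNReal.ofReal (18 * 1458 ^ 2 * 144 ^ (σ - 1)) = 18 * 1458 ^ 2 * 144 ^ (σ - 1) := by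
    rw [ENNReal.ofReal_mul (by positivity), ← ENNReal.ofReal_rpow_of_pos (by norm_num)]
    norm_num
  simp only [hweight, hbracket, hC]
  exact tsum_rpow_mul_dconv3_sq_le hσ fun n => a n
end
end
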